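/- arXiv:1312.1645 — 9 statements merged into one kernel-verified Lean document; each statement's English description precedes it below -/
import Mathlib

section
/- For 0 < τ < 1 and an integrable real-valued random variable L, there exists a unique real number ℓ satisfying τ·E[max(L − ℓ, 0)] = (1 − τ)·E[max(ℓ − L, 0)]. -/
open MeasureTheory

/-!
Write `g ℓ = E[max (L - ℓ) 0]` and `k ℓ = E[max (ℓ - L) 0]`. Since `g ℓ - k ℓ = E[L] - ℓ`, for
`x ≤ y` the decrease `A = g x - g y` and the increase `B = k y - k x` are nonnegative with
`A + B = y - x`. Hence `f = τ g - (1 - τ) k` drops by `τ A + (1 - τ) B ∈ [τ (1 - τ) (y - x), y - x]`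
between `x` and `y`: it is a continuous, strictly decreasing function tending to `∓∞` at `±∞`,
so it has exactly one zero.
-/

theorem lipschitzWith_one_of_antitone_of_sub_le {f : ℝ → ℝ}
    (hf : ∀ x y, x ≤ y → 0 ≤ f x - f y ∧ f x - f y ≤ y - x) : LipschitzWith 1 f := by
  refine LipschitzWith.of_dist_le_mul fun x y => ?_
  rw [NNReal.coe_one, one_mul, Real.dist_eq, Real.dist_eq]
  rcases le_total x y with hxy | hyx
  · rw [abs_of_nonneg (hf x y hxy).1, abs_of_nonpos (sub_nonpos.2 hxy)]
    linarith [(hf x y hxy).2]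
  · rw [abs_of_nonpos (by linarith [(hf y x hyx).1]), abs_of_nonneg (sub_nonneg.2 hyx)]
    linarith [(hf y x hyx).2]

theorem bijective_of_antitone_of_sub_le {f : ℝ → ℝ} {c : ℝ} (hc : 0 < c)
    (hf : ∀ x y, x ≤ y → c * (y - x) ≤ f x - f y ∧ f x - f y ≤ y - x) :
    Function.Bijective f := by
  have hanti : StrictAnti f := fun x y hxy => by
    nlinarith [(hf x y hxy.le).1]
  refine ⟨hanti.injective, fun p => ?_⟩
  have hcont : Continuous f :=
    (lipschitzWith_one_of_antitone_of_sub_le fun x y hxy =>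
      ⟨le_trans (by nlinarith) (hf x y hxy).1, (hf x y hxy).2⟩).continuous
  set r := |f 0 - p| / c
  have hr : 0 ≤ r := by positivity
  have hcr : c * r = |f 0 - p| := mul_div_cancel₀ _ hc.ne'
  -- `f r ≤ f 0 - c r ≤ p ≤ f 0 + c r ≤ f (-r)`
  refine mem_range_of_exists_le_of_exists_ge hcont ⟨r, ?_⟩ ⟨-r, ?_⟩
  · have := (hf 0 r hr).1
    linarith [le_abs_self (f 0 - p)]
  · have := (hf (-r) 0 (by linarith)).1
    linarith [neg_abs_le (f 0 - p)]

section Expectile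

variable {Ω : Type*} [MeasurableSpace Ω] {P : Measure Ω} {L : Ω → ℝ}

noncomputable def expectileGap (P : Measure Ω) (L : Ω → ℝ) (τ ℓ : ℝ) : ℝ :=
  τ * ∫ ω, max (L ω - ℓ) 0 ∂P - (1 - τ) * ∫ ω, max (ℓ - L ω) 0 ∂P

theorem integral_max_sub_zero_sub_integral_max_sub_zero [IsProbabilityMeasure P]
    (hL : Integrable L P) (ℓ : ℝ) :
    ∫ ω, max (L ω - ℓ) 0 ∂P - ∫ ω, max (ℓ - L ω) 0 ∂P = ∫ ω, L ω ∂P - ℓ := by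
  have hpos : Integrable (fun ω => max (L ω - ℓ) 0) P := (hL.sub (integrable_const ℓ)).pos_part
  have hneg : Integrable (fun ω => max (ℓ - L ω) 0) P := ((integrable_const ℓ).sub hL).pos_part
  rw [← integral_sub hpos hneg]
  simp_rw [← neg_sub (L _) ℓ, max_zero_sub_max_neg_zero_eq_self]
  rw [integral_sub hL (integrable_const ℓ), integral_const, probReal_univ, one_smul]

theorem expectileGap_sub_mem_Icc [IsProbabilityMeasure P] (hL : Integrable L P) {τ : ℝ}
    (hτ0 : 0 ≤ τ) (hτ1 : τ ≤ 1) {x y : ℝ} (hxy : x ≤ y) :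
    τ * (1 - τ) * (y - x) ≤ expectileGap P L τ x - expectileGap P L τ y ∧
      expectileGap P L τ x - expectileGap P L τ y ≤ y - x := by
  have hpos : ∫ ω, max (L ω - y) 0 ∂P ≤ ∫ ω, max (L ω - x) 0 ∂P :=
    integral_mono (hL.sub (integrable_const y)).pos_part (hL.sub (integrable_const x)).pos_part
      fun ω => max_le_max (by linarith) le_rfl
  have hneg : ∫ ω, max (x - L ω) 0 ∂P ≤ ∫ ω, max (y - L ω) 0 ∂P :=
    integral_mono ((integrable_const x).sub hL).pos_part ((integrable_const y).sub hL).pos_part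
      fun ω => max_le_max (by linarith) le_rfl
  have hsum : (∫ ω, max (L ω - x) 0 ∂P - ∫ ω, max (L ω - y) 0 ∂P) +
      (∫ ω, max (y - L ω) 0 ∂P - ∫ ω, max (x - L ω) 0 ∂P) = y - x := by
    linarith [integral_max_sub_zero_sub_integral_max_sub_zero hL x,
      integral_max_sub_zero_sub_integral_max_sub_zero hL y]
  have hA := sub_nonneg.2 hpos
  have hB := sub_nonneg.2 hneg
  unfold expectileGap
  -- With `A`, `B` the differences in `hA`, `hB`:
  -- `τ A + (1 - τ) B - τ (1 - τ) (A + B) = τ² A + (1 - τ)² B`.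
  constructor
  · nlinarith [mul_nonneg (mul_self_nonneg τ) hA, mul_nonneg (mul_self_nonneg (1 - τ)) hB]
  · nlinarith [mul_nonneg (sub_nonneg.2 hτ1) hA, mul_nonneg hτ0 hB]

end Expectile

theorem expectile_exists_unique {Ω : Type*} [MeasurableSpace Ω] (P : Measure Ω)
    [IsProbabilityMeasure P] (L : Ω → ℝ) (hL : Integrable L P)
    (τ : ℝ) (hτ0 : 0 < τ) (hτ1 : τ < 1) :
    ∃! ℓ : ℝ, τ * ∫ ω, max (L ω - ℓ) 0 ∂P = (1 - τ) * ∫ ω, max (ℓ - L ω) 0 ∂P := by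
  have hbij : Function.Bijective (expectileGap P L τ) :=
    bijective_of_antitone_of_sub_le (mul_pos hτ0 (sub_pos.2 hτ1))
      fun x y hxy => expectileGap_sub_mem_Icc hL hτ0.le hτ1.le hxy
  simpa only [expectileGap, sub_eq_zero] using hbij.existsUnique 0
end

section
/- For 0 < τ < 1 and a square-integrable random variable L, the τ-expectile e_τ(L) is the unique minimizer over ℓ ∈ ℝ of the function ℓ ↦ E[τ·max(L − ℓ, 0)² + (1 − τ)·max(ℓ − L, 0)²]. -/
/-!
The expectile loss `ℓ ↦ τ (a - ℓ)₊² + (1 - τ) (ℓ - a)₊²` is strongly convex with modulus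
`min τ (1 - τ)`, and its derivative in `ℓ` is `-2` times the identification function
`τ (a - ℓ)₊ - (1 - τ) (ℓ - a)₊`. Integrating the strong-convexity inequality at `e`, the
first-order term has mean zero exactly when `e` is the expectile, so the expected loss at any
`ℓ ≠ e` exceeds the one at `e` by at least `min τ (1 - τ) (e - ℓ)²`.
-/

open MeasureTheory

namespace Expectile

def loss (τ ℓ a : ℝ) : ℝ := τ * max (a - ℓ) 0 ^ 2 + (1 - τ) * max (ℓ - a) 0 ^ 2

def identification (τ ℓ a : ℝ) : ℝ := τ * max (a - ℓ) 0 - (1 - τ) * max (ℓ - a) 0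

theorem loss_add_identification_mul_add_sq_le (τ e ℓ a : ℝ) :
    loss τ e a - 2 * identification τ e a * (ℓ - e) + min τ (1 - τ) * (ℓ - e) ^ 2
      ≤ loss τ ℓ a := by
  unfold loss identification
  rcases le_total a e with he | he <;> rcases le_total a ℓ with hℓ | hℓ <;>
    rcases le_total τ (1 - τ) with hmin | hmin <;>
    simp only [min_eq_left, min_eq_right, max_eq_left, max_eq_right, sub_nonneg, sub_nonpos,
      he, hℓ, hmin] <;>
    nlinarith [mul_nonneg (sub_nonneg.2 hmin) (sq_nonneg (ℓ - e)),
      mul_nonneg (sub_nonneg.2 hmin) (mul_nonneg (sub_nonneg.2 he) (sub_nonneg.2 hℓ))]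

variable {Ω : Type*} [MeasurableSpace Ω] {P : Measure Ω} {L : Ω → ℝ}

theorem integrable_loss [IsFiniteMeasure P] (hL : MemLp L 2 P) (τ ℓ : ℝ) :
    Integrable (fun ω ↦ loss τ ℓ (L ω)) P :=
  ((hL.sub (memLp_const ℓ)).pos_part.integrable_sq.const_mul τ).add
    (((memLp_const ℓ).sub hL).pos_part.integrable_sq.const_mul (1 - τ))

theorem integrable_identification [IsFiniteMeasure P] (hL : MemLp L 2 P) (τ ℓ : ℝ) :
    Integrable (fun ω ↦ identification τ ℓ (L ω)) P :=
  (((hL.sub (memLp_const ℓ)).pos_part.integrable one_le_two).const_mul τ).sub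
    ((((memLp_const ℓ).sub hL).pos_part.integrable one_le_two).const_mul (1 - τ))

theorem integral_identification_eq_zero [IsFiniteMeasure P] (hL : MemLp L 2 P) {τ e : ℝ}
    (he : τ * ∫ ω, max (L ω - e) 0 ∂P = (1 - τ) * ∫ ω, max (e - L ω) 0 ∂P) :
    ∫ ω, identification τ e (L ω) ∂P = 0 := by
  unfold identification
  rw [integral_sub, integral_const_mul, integral_const_mul, he, sub_self]
  · exact ((hL.sub (memLp_const e)).pos_part.integrable one_le_two).const_mul τ
  · exact (((memLp_const e).sub hL).pos_part.integrable one_le_two).const_mul (1 - τ)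

theorem integral_loss_add_sq_le [IsProbabilityMeasure P] (hL : MemLp L 2 P) {τ e : ℝ}
    (he : ∫ ω, identification τ e (L ω) ∂P = 0) (ℓ : ℝ) :
    ∫ ω, loss τ e (L ω) ∂P + min τ (1 - τ) * (ℓ - e) ^ 2 ≤ ∫ ω, loss τ ℓ (L ω) ∂P := by
  have hlin : Integrable (fun ω ↦ 2 * identification τ e (L ω) * (ℓ - e)) P :=
    ((integrable_identification hL τ e).const_mul 2).mul_const _
  have hdiff : Integrable
      (fun ω ↦ loss τ e (L ω) - 2 * identification τ e (L ω) * (ℓ - e)) P :=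
    (integrable_loss hL τ e).sub hlin
  calc ∫ ω, loss τ e (L ω) ∂P + min τ (1 - τ) * (ℓ - e) ^ 2
      = ∫ ω, (loss τ e (L ω) - 2 * identification τ e (L ω) * (ℓ - e)
          + min τ (1 - τ) * (ℓ - e) ^ 2) ∂P := by
        rw [integral_add hdiff (integrable_const _), integral_sub (integrable_loss hL τ e) hlin,
          integral_mul_const, integral_const_mul, he]
        simp
    _ ≤ ∫ ω, loss τ ℓ (L ω) ∂P :=
        integral_mono (hdiff.add (integrable_const _)) (integrable_loss hL τ ℓ)
          fun ω ↦ loss_add_identification_mul_add_sq_le τ e ℓ (L ω)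

end Expectile

open Expectile in
theorem expectile_unique_minimizer {Ω : Type*} [MeasurableSpace Ω] (P : Measure Ω)
    [IsProbabilityMeasure P] (L : Ω → ℝ) (hL : MemLp L 2 P)
    (τ : ℝ) (hτ0 : 0 < τ) (hτ1 : τ < 1) (e : ℝ)
    (he : τ * ∫ ω, max (L ω - e) 0 ∂P = (1 - τ) * ∫ ω, max (e - L ω) 0 ∂P) :
    ∀ ℓ : ℝ, ℓ ≠ e →
      (∫ ω, (τ * max (L ω - e) 0 ^ 2 + (1 - τ) * max (e - L ω) 0 ^ 2) ∂P)
        < ∫ ω, (τ * max (L ω - ℓ) 0 ^ 2 + (1 - τ) * max (ℓ - L ω) 0 ^ 2) ∂P := by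
  intro ℓ hℓ
  have hgap : 0 < min τ (1 - τ) * (ℓ - e) ^ 2 :=
    mul_pos (lt_min hτ0 (sub_pos.2 hτ1)) (sq_pos_of_ne_zero (sub_ne_zero.2 hℓ))
  have hle := integral_loss_add_sq_le hL (integral_identification_eq_zero hL he) ℓ
  unfold loss at hle
  linarith
end

section
/- For 1/2 ≤ τ < 1 and integrable random variables L₁, L₂ on a common probability space, the τ-expectile is subadditive: e_τ(L₁ + L₂) ≤ e_τ(L₁) + e_τ(L₂). -/
/-!
Writing `(L - ℓ)⁺ = (L - ℓ) + (ℓ - L)⁺`, the expectile equation becomes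
`τ (ℓ - E L) = (2τ - 1) E (ℓ - L)⁺`. The shortfall `ℓ ↦ E (ℓ - L)⁺` is subadditive in `(L, ℓ)`
and `1`-Lipschitz in `ℓ`, so with `s = ℓ₁ + ℓ₂` and `d = ℓ₁₂ - s` the three equations give
`τ d ≤ (2τ - 1) max d 0`, which forces `d ≤ 0` because `2τ - 1 < τ`.
-/

open MeasureTheory

section Expectile

variable {Ω : Type*} [MeasurableSpace Ω]

def IsExpectile (P : Measure Ω) (τ : ℝ) (L : Ω → ℝ) (ℓ : ℝ) : Prop :=
  τ * ∫ ω, max (L ω - ℓ) 0 ∂P = (1 - τ) * ∫ ω, max (ℓ - L ω) 0 ∂P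

lemma integrable_max_sub_zero {P : Measure Ω} [IsFiniteMeasure P] {L : Ω → ℝ}
    (hL : Integrable L P) (c : ℝ) : Integrable (fun ω => max (c - L ω) 0) P :=
  ((integrable_const c).sub hL).pos_part

variable {P : Measure Ω} [IsProbabilityMeasure P]

lemma integral_max_sub_zero_eq {L : Ω → ℝ} (hL : Integrable L P) (c : ℝ) :
    ∫ ω, max (L ω - c) 0 ∂P = (∫ ω, L ω ∂P) - c + ∫ ω, max (c - L ω) 0 ∂P := by
  have hpt : ∀ ω, max (L ω - c) 0 = (L ω - c) + max (c - L ω) 0 := fun ω => by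
    rcases le_total (L ω) c with h | h
    · rw [max_eq_right (sub_nonpos.2 h), max_eq_left (sub_nonneg.2 h)]; ring
    · rw [max_eq_left (sub_nonneg.2 h), max_eq_right (sub_nonpos.2 h)]; ring
  simp_rw [hpt]
  have hL_sub : Integrable (fun ω => L ω - c) P := hL.sub (integrable_const c)
  rw [integral_add hL_sub (integrable_max_sub_zero hL c), integral_sub hL (integrable_const c),
    integral_const, probReal_univ, one_smul]

lemma IsExpectile.mul_sub_integral_eq {τ : ℝ} {L : Ω → ℝ} {ℓ : ℝ} (h : IsExpectile P τ L ℓ)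
    (hL : Integrable L P) :
    τ * (ℓ - ∫ ω, L ω ∂P) = (2 * τ - 1) * ∫ ω, max (ℓ - L ω) 0 ∂P := by
  unfold IsExpectile at h
  rw [integral_max_sub_zero_eq hL] at h
  linarith

lemma integral_max_sub_zero_le_add {X : Ω → ℝ} (hX : Integrable X P) (a b : ℝ) :
    ∫ ω, max (a - X ω) 0 ∂P ≤ ∫ ω, max (b - X ω) 0 ∂P + max (a - b) 0 := by
  have hmono : ∫ ω, max (a - X ω) 0 ∂P ≤ ∫ ω, (max (b - X ω) 0 + max (a - b) 0) ∂P := by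
    refine integral_mono (integrable_max_sub_zero hX a)
      ((integrable_max_sub_zero hX b).add (integrable_const _)) fun ω => ?_
    have := le_max_left (b - X ω) 0
    have := le_max_left (a - b) 0
    exact max_le (by linarith) (add_nonneg (le_max_right _ _) (le_max_right _ _))
  rwa [integral_add (integrable_max_sub_zero hX b) (integrable_const _), integral_const,
    probReal_univ, one_smul] at hmono

lemma integral_max_add_sub_add_zero_le {X Y : Ω → ℝ} (hX : Integrable X P)
    (hY : Integrable Y P) (a b : ℝ) :
    ∫ ω, max ((a + b) - (X ω + Y ω)) 0 ∂P
      ≤ ∫ ω, max (a - X ω) 0 ∂P + ∫ ω, max (b - Y ω) 0 ∂P := by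
  rw [← integral_add (integrable_max_sub_zero hX a) (integrable_max_sub_zero hY b)]
  refine integral_mono (integrable_max_sub_zero (hX.add hY) (a + b))
    ((integrable_max_sub_zero hX a).add (integrable_max_sub_zero hY b)) fun ω => ?_
  have := le_max_left (a - X ω) 0
  have := le_max_left (b - Y ω) 0
  exact max_le (by dsimp only; linarith) (add_nonneg (le_max_right _ _) (le_max_right _ _))

end Expectile

theorem expectile_subadditive {Ω : Type*} [MeasurableSpace Ω] (P : Measure Ω)
    [IsProbabilityMeasure P] (L₁ L₂ : Ω → ℝ) (hL₁ : Integrable L₁ P) (hL₂ : Integrable L₂ P)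
    (τ : ℝ) (hτ0 : 1 / 2 ≤ τ) (hτ1 : τ < 1) (ℓ₁ ℓ₂ ℓ₁₂ : ℝ)
    (hℓ₁ : τ * ∫ ω, max (L₁ ω - ℓ₁) 0 ∂P = (1 - τ) * ∫ ω, max (ℓ₁ - L₁ ω) 0 ∂P)
    (hℓ₂ : τ * ∫ ω, max (L₂ ω - ℓ₂) 0 ∂P = (1 - τ) * ∫ ω, max (ℓ₂ - L₂ ω) 0 ∂P)
    (hℓ₁₂ : τ * ∫ ω, max ((L₁ ω + L₂ ω) - ℓ₁₂) 0 ∂P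
        = (1 - τ) * ∫ ω, max (ℓ₁₂ - (L₁ ω + L₂ ω)) 0 ∂P) :
    ℓ₁₂ ≤ ℓ₁ + ℓ₂ := by
  have e₁ := IsExpectile.mul_sub_integral_eq (L := L₁) hℓ₁ hL₁
  have e₂ := IsExpectile.mul_sub_integral_eq (L := L₂) hℓ₂ hL₂
  have e₁₂ := IsExpectile.mul_sub_integral_eq (L := fun ω => L₁ ω + L₂ ω) hℓ₁₂ (hL₁.add hL₂)
  rw [integral_add hL₁ hL₂] at e₁₂
  have hshortfall : ∫ ω, max (ℓ₁₂ - (L₁ ω + L₂ ω)) 0 ∂P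
      ≤ ∫ ω, max (ℓ₁ - L₁ ω) 0 ∂P + ∫ ω, max (ℓ₂ - L₂ ω) 0 ∂P + max (ℓ₁₂ - (ℓ₁ + ℓ₂)) 0 :=
    (integral_max_sub_zero_le_add (hL₁.add hL₂) ℓ₁₂ (ℓ₁ + ℓ₂)).trans
      (add_le_add_left (integral_max_add_sub_add_zero_le hL₁ hL₂ ℓ₁ ℓ₂) _)
  have hgap : τ * (ℓ₁₂ - (ℓ₁ + ℓ₂)) ≤ (2 * τ - 1) * max (ℓ₁₂ - (ℓ₁ + ℓ₂)) 0 := by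
    nlinarith [mul_le_mul_of_nonneg_left hshortfall (by linarith : (0 : ℝ) ≤ 2 * τ - 1)]
  by_contra hlt
  rw [max_eq_left (by linarith)] at hgap
  nlinarith
end

section
/- For 0 < τ ≤ 1/2 and integrable random variables L₁, L₂ on a common probability space, the τ-expectile is superadditive: e_τ(L₁ + L₂) ≥ e_τ(L₁) + e_τ(L₂). -/
/-!
Writing `x⁺ = max x 0`, an expectile equation can be rearranged, using
`(L - ℓ)⁺ - (ℓ - L)⁺ = L - ℓ`, into `τ (E L - ℓ) = (1 - 2τ) E (ℓ - L)⁺`.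
If `ℓ₁₂ < ℓ₁ + ℓ₂`, then pointwise `(ℓ₁₂ - L₁ - L₂)⁺ ≤ (ℓ₁ - L₁)⁺ + (ℓ₂ - L₂)⁺`, and since
`1 - 2τ ≥ 0` the rearranged equations give `τ (ℓ₁ + ℓ₂ - ℓ₁₂) ≤ 0`, a contradiction.
-/

open MeasureTheory

namespace Expectile

variable {Ω : Type*} [MeasurableSpace Ω]

def IsExpectile (P : Measure Ω) (L : Ω → ℝ) (τ ℓ : ℝ) : Prop :=
  τ * ∫ ω, max (L ω - ℓ) 0 ∂P = (1 - τ) * ∫ ω, max (ℓ - L ω) 0 ∂P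

lemma max_sub_zero_sub_max_sub_zero (x ℓ : ℝ) : max (x - ℓ) 0 - max (ℓ - x) 0 = x - ℓ := by
  rcases le_total x ℓ with h | h <;> simp [h]

lemma max_sub_add_zero_le_of_le {ℓ ℓ₁ ℓ₂ : ℝ} (h : ℓ ≤ ℓ₁ + ℓ₂) (x y : ℝ) :
    max (ℓ - (x + y)) 0 ≤ max (ℓ₁ - x) 0 + max (ℓ₂ - y) 0 :=
  calc max (ℓ - (x + y)) 0
      ≤ max ((ℓ₁ - x) + (ℓ₂ - y)) 0 := max_le_max_right 0 (by linarith)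
    _ ≤ max (ℓ₁ - x) 0 + max (ℓ₂ - y) 0 := by
        simpa only [add_zero] using
          max_add_add_le_max_add_max (a := ℓ₁ - x) (b := ℓ₂ - y) (c := (0 : ℝ)) (d := 0)

lemma integrable_max_sub_zero {P : Measure Ω} [IsFiniteMeasure P] {L : Ω → ℝ}
    (hL : Integrable L P) (ℓ : ℝ) : Integrable (fun ω => max (ℓ - L ω) 0) P :=
  ((integrable_const ℓ).sub hL).pos_part

lemma integral_max_sub_add_zero_le {P : Measure Ω} [IsFiniteMeasure P] {X Y : Ω → ℝ}
    (hX : Integrable X P) (hY : Integrable Y P) {ℓ ℓ₁ ℓ₂ : ℝ} (h : ℓ ≤ ℓ₁ + ℓ₂) :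
    ∫ ω, max (ℓ - (X ω + Y ω)) 0 ∂P
      ≤ ∫ ω, max (ℓ₁ - X ω) 0 ∂P + ∫ ω, max (ℓ₂ - Y ω) 0 ∂P := by
  rw [← integral_add (integrable_max_sub_zero hX ℓ₁) (integrable_max_sub_zero hY ℓ₂)]
  exact integral_mono (integrable_max_sub_zero (hX.add hY) ℓ)
    ((integrable_max_sub_zero hX ℓ₁).add (integrable_max_sub_zero hY ℓ₂))
    fun ω => max_sub_add_zero_le_of_le h (X ω) (Y ω)

lemma integral_max_sub_zero_sub_integral_max_sub_zero {P : Measure Ω} [IsProbabilityMeasure P]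
    {L : Ω → ℝ} (hL : Integrable L P) (ℓ : ℝ) :
    ∫ ω, max (L ω - ℓ) 0 ∂P - ∫ ω, max (ℓ - L ω) 0 ∂P = ∫ ω, L ω ∂P - ℓ := by
  have hpos : Integrable (fun ω => max (L ω - ℓ) 0) P := (hL.sub (integrable_const ℓ)).pos_part
  rw [← integral_sub hpos (integrable_max_sub_zero hL ℓ)]
  simp only [max_sub_zero_sub_max_sub_zero]
  rw [integral_sub hL (integrable_const ℓ), integral_const, probReal_univ, one_smul]

lemma IsExpectile.mul_integral_sub_eq {P : Measure Ω} [IsProbabilityMeasure P] {L : Ω → ℝ}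
    {τ ℓ : ℝ} (h : IsExpectile P L τ ℓ) (hL : Integrable L P) :
    τ * (∫ ω, L ω ∂P - ℓ) = (1 - 2 * τ) * ∫ ω, max (ℓ - L ω) 0 ∂P := by
  unfold IsExpectile at h
  linear_combination h - τ * integral_max_sub_zero_sub_integral_max_sub_zero hL ℓ

end Expectile

open Expectile

theorem expectile_superadditive {Ω : Type*} [MeasurableSpace Ω] (P : Measure Ω)
    [IsProbabilityMeasure P] (L₁ L₂ : Ω → ℝ) (hL₁ : Integrable L₁ P) (hL₂ : Integrable L₂ P)
    (τ : ℝ) (hτ0 : 0 < τ) (hτ1 : τ ≤ 1 / 2) (ℓ₁ ℓ₂ ℓ₁₂ : ℝ)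
    (hℓ₁ : τ * ∫ ω, max (L₁ ω - ℓ₁) 0 ∂P = (1 - τ) * ∫ ω, max (ℓ₁ - L₁ ω) 0 ∂P)
    (hℓ₂ : τ * ∫ ω, max (L₂ ω - ℓ₂) 0 ∂P = (1 - τ) * ∫ ω, max (ℓ₂ - L₂ ω) 0 ∂P)
    (hℓ₁₂ : τ * ∫ ω, max ((L₁ ω + L₂ ω) - ℓ₁₂) 0 ∂P
        = (1 - τ) * ∫ ω, max (ℓ₁₂ - (L₁ ω + L₂ ω)) 0 ∂P) :
    ℓ₁ + ℓ₂ ≤ ℓ₁₂ := by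
  by_contra! hlt
  have e₁ := IsExpectile.mul_integral_sub_eq hℓ₁ hL₁
  have e₂ := IsExpectile.mul_integral_sub_eq hℓ₂ hL₂
  have e₁₂ := IsExpectile.mul_integral_sub_eq (L := fun ω => L₁ ω + L₂ ω) hℓ₁₂ (hL₁.add hL₂)
  rw [integral_add hL₁ hL₂] at e₁₂
  have hle := mul_le_mul_of_nonneg_left (integral_max_sub_add_zero_le hL₁ hL₂ hlt.le)
    (by linarith : 0 ≤ 1 - 2 * τ)
  linarith [mul_pos hτ0 (sub_pos.2 hlt)]
end

section
/- For 0 < τ < 1, the τ-expectile is Lipschitz with respect to the L¹ distance with constant K = max{τ/(1−τ), (1−τ)/τ}: for integrable random variables X, Y on the same probability space, |e_τ(X) − e_τ(Y)| ≤ K·E[|X − Y|]. -/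
/-!
With `V(t) = τ t⁺ - (1 - τ) t⁻` (`expectileIdent`), `ℓ` is a `τ`-expectile of `X` exactly
when `ψ_X(ℓ) = E[V(X - ℓ)]` (`expectileMoment`) vanishes. Since `V(t) - V(s)` lies between
`min(τ, 1 - τ) (t - s)` and `max(τ, 1 - τ) (t - s)` for `s ≤ t`, the map `ψ_X` decreases at
rate at least `min(τ, 1 - τ)`, while `|ψ_X(ℓ) - ψ_Y(ℓ)| ≤ max(τ, 1 - τ) E|X - Y|`. Hence
`min(τ, 1 - τ) |ℓ_X - ℓ_Y| ≤ |ψ_X(ℓ_Y) - ψ_X(ℓ_X)| = |ψ_X(ℓ_Y) - ψ_Y(ℓ_Y)|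
  ≤ max(τ, 1 - τ) E|X - Y|`,
and `max(τ, 1 - τ) / min(τ, 1 - τ) = max(τ / (1 - τ), (1 - τ) / τ)`.
-/

open MeasureTheory

noncomputable section

def expectileIdent (τ t : ℝ) : ℝ := τ * max t 0 - (1 - τ) * max (-t) 0

def expectileMoment {Ω : Type*} [MeasurableSpace Ω] (P : Measure Ω) (X : Ω → ℝ) (τ ℓ : ℝ) :
    ℝ :=
  ∫ ω, expectileIdent τ (X ω - ℓ) ∂P

end

section Pointwise

variable (τ : ℝ) {s t : ℝ}

lemma expectileIdent_sub_mem_Icc (hst : s ≤ t) :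
    expectileIdent τ t - expectileIdent τ s ∈
      Set.Icc (min τ (1 - τ) * (t - s)) (max τ (1 - τ) * (t - s)) := by
  have hA : 0 ≤ max t 0 - max s 0 := sub_nonneg.mpr (max_le_max hst le_rfl)
  have hB : 0 ≤ max (-s) 0 - max (-t) 0 := sub_nonneg.mpr (max_le_max (neg_le_neg hst) le_rfl)
  have hAB : (max t 0 - max s 0) + (max (-s) 0 - max (-t) 0) = t - s := by
    linarith [max_zero_sub_eq_self t, max_zero_sub_eq_self s]
  have := min_le_left τ (1 - τ)
  have := min_le_right τ (1 - τ)
  have := le_max_left τ (1 - τ)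
  have := le_max_right τ (1 - τ)
  unfold expectileIdent
  constructor <;> nlinarith

lemma abs_expectileIdent_sub_le (s t : ℝ) :
    |expectileIdent τ t - expectileIdent τ s| ≤ max τ (1 - τ) * |t - s| := by
  have hsum : min τ (1 - τ) + max τ (1 - τ) = 1 := by rw [min_add_max]; ring
  rcases le_total s t with hst | hts
  · obtain ⟨hlo, hhi⟩ := expectileIdent_sub_mem_Icc τ hst
    rw [abs_of_nonneg (sub_nonneg.mpr hst), abs_le]
    constructor <;> nlinarith
  · obtain ⟨hlo, hhi⟩ := expectileIdent_sub_mem_Icc τ hts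
    rw [abs_sub_comm, abs_sub_comm t, abs_of_nonneg (sub_nonneg.mpr hts), abs_le]
    constructor <;> nlinarith

end Pointwise

section Moment

variable {Ω : Type*} [MeasurableSpace Ω] {P : Measure Ω} {X Y : Ω → ℝ}

lemma MeasureTheory.Integrable.expectileIdent_sub [IsFiniteMeasure P] (hX : Integrable X P)
    (τ ℓ : ℝ) : Integrable (fun ω => expectileIdent τ (X ω - ℓ)) P := by
  have hpos : Integrable (fun ω => max (X ω - ℓ) 0) P := (hX.sub (integrable_const ℓ)).pos_part
  have hneg : Integrable (fun ω => max (ℓ - X ω) 0) P := ((integrable_const ℓ).sub hX).pos_part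
  simp only [expectileIdent, neg_sub]
  exact (hpos.const_mul τ).sub (hneg.const_mul (1 - τ))

lemma expectileMoment_eq_zero_iff [IsFiniteMeasure P] (hX : Integrable X P) (τ ℓ : ℝ) :
    expectileMoment P X τ ℓ = 0 ↔
      τ * ∫ ω, max (X ω - ℓ) 0 ∂P = (1 - τ) * ∫ ω, max (ℓ - X ω) 0 ∂P := by
  have hpos : Integrable (fun ω => max (X ω - ℓ) 0) P := (hX.sub (integrable_const ℓ)).pos_part
  have hneg : Integrable (fun ω => max (ℓ - X ω) 0) P := ((integrable_const ℓ).sub hX).pos_part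
  simp only [expectileMoment, expectileIdent, neg_sub]
  rw [integral_sub (hpos.const_mul τ) (hneg.const_mul _), integral_const_mul, integral_const_mul,
    sub_eq_zero]

lemma min_mul_sub_le_expectileMoment_sub [IsProbabilityMeasure P] (hX : Integrable X P)
    (τ : ℝ) {ℓ ℓ' : ℝ} (h : ℓ ≤ ℓ') :
    min τ (1 - τ) * (ℓ' - ℓ) ≤ expectileMoment P X τ ℓ - expectileMoment P X τ ℓ' := by
  rw [expectileMoment, expectileMoment,
    ← integral_sub (hX.expectileIdent_sub τ ℓ) (hX.expectileIdent_sub τ ℓ')]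
  refine le_of_eq_of_le (by simp) (integral_mono (integrable_const (min τ (1 - τ) * (ℓ' - ℓ)))
    ((hX.expectileIdent_sub τ ℓ).sub (hX.expectileIdent_sub τ ℓ')) fun ω => ?_)
  have := (expectileIdent_sub_mem_Icc τ (sub_le_sub_left h (X ω))).1
  rwa [sub_sub_sub_cancel_left] at this

lemma min_mul_abs_sub_le_abs_expectileMoment_sub [IsProbabilityMeasure P]
    (hX : Integrable X P) (τ ℓ ℓ' : ℝ) :
    min τ (1 - τ) * |ℓ - ℓ'| ≤ |expectileMoment P X τ ℓ - expectileMoment P X τ ℓ'| := by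
  rcases le_total ℓ ℓ' with h | h
  · rw [abs_sub_comm ℓ, abs_of_nonneg (sub_nonneg.mpr h)]
    exact (min_mul_sub_le_expectileMoment_sub hX τ h).trans (le_abs_self _)
  · rw [abs_sub_comm (expectileMoment P X τ ℓ), abs_of_nonneg (sub_nonneg.mpr h)]
    exact (min_mul_sub_le_expectileMoment_sub hX τ h).trans (le_abs_self _)

lemma abs_expectileMoment_sub_le [IsFiniteMeasure P] (hX : Integrable X P)
    (hY : Integrable Y P) (τ ℓ : ℝ) :
    |expectileMoment P X τ ℓ - expectileMoment P Y τ ℓ| ≤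
      max τ (1 - τ) * ∫ ω, |X ω - Y ω| ∂P := by
  rw [expectileMoment, expectileMoment,
    ← integral_sub (hX.expectileIdent_sub τ ℓ) (hY.expectileIdent_sub τ ℓ),
    ← integral_const_mul (μ := P) (max τ (1 - τ)) fun ω => |X ω - Y ω|, ← Real.norm_eq_abs]
  refine norm_integral_le_of_norm_le ((hX.sub hY).abs.const_mul _) (.of_forall fun ω => ?_)
  simpa only [Real.norm_eq_abs, sub_sub_sub_cancel_right] using
    abs_expectileIdent_sub_le τ (Y ω - ℓ) (X ω - ℓ)

end Moment

lemma max_div_div_eq_max_div_min {a b : ℝ} (ha : 0 < a) (hb : 0 < b) :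
    max (a / b) (b / a) = max a b / min a b := by
  rcases le_total a b with h | h
  · rw [max_eq_right h, min_eq_left h, max_eq_right]
    exact div_le_div₀ hb.le h ha h
  · rw [max_eq_left h, min_eq_right h, max_eq_left]
    exact div_le_div₀ ha.le h hb h

theorem expectile_lipschitz_L1 {Ω : Type*} [MeasurableSpace Ω] (P : Measure Ω)
    [IsProbabilityMeasure P] (X Y : Ω → ℝ) (hX : Integrable X P) (hY : Integrable Y P)
    (τ : ℝ) (hτ0 : 0 < τ) (hτ1 : τ < 1) (ℓX ℓY : ℝ)
    (hℓX : τ * ∫ ω, max (X ω - ℓX) 0 ∂P = (1 - τ) * ∫ ω, max (ℓX - X ω) 0 ∂P)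
    (hℓY : τ * ∫ ω, max (Y ω - ℓY) 0 ∂P = (1 - τ) * ∫ ω, max (ℓY - Y ω) 0 ∂P) :
    |ℓX - ℓY| ≤ max (τ / (1 - τ)) ((1 - τ) / τ) * ∫ ω, |X ω - Y ω| ∂P := by
  have hmin : 0 < min τ (1 - τ) := lt_min hτ0 (sub_pos.mpr hτ1)
  have hψX := (expectileMoment_eq_zero_iff hX τ ℓX).mpr hℓX
  have hψY := (expectileMoment_eq_zero_iff hY τ ℓY).mpr hℓY
  have key : min τ (1 - τ) * |ℓX - ℓY| ≤ max τ (1 - τ) * ∫ ω, |X ω - Y ω| ∂P :=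
    calc min τ (1 - τ) * |ℓX - ℓY|
        ≤ |expectileMoment P X τ ℓX - expectileMoment P X τ ℓY| :=
          min_mul_abs_sub_le_abs_expectileMoment_sub hX τ ℓX ℓY
      _ = |expectileMoment P X τ ℓY - expectileMoment P Y τ ℓY| := by
          rw [hψX, hψY, zero_sub, abs_neg, sub_zero]
      _ ≤ max τ (1 - τ) * ∫ ω, |X ω - Y ω| ∂P := abs_expectileMoment_sub_le hX hY τ ℓY
  rw [max_div_div_eq_max_div_min hτ0 (sub_pos.mpr hτ1), div_mul_eq_mul_div,
    le_div_iff₀ hmin, mul_comm]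
  exact key
end

section
/- VaR is comonotonically additive: if L₁ = f₁(X) and L₂ = f₂(X) for a real random variable X and non-decreasing left-continuous functions f₁, f₂, then for 0 < α < 1, VaR_α(L₁ + L₂) = VaR_α(L₁) + VaR_α(L₂). -/
open MeasureTheory

noncomputable def VaR {Ω : Type*} [MeasurableSpace Ω] (P : Measure Ω) (α : ℝ) (L : Ω → ℝ) : ℝ :=
  sInf {ℓ : ℝ | ENNReal.ofReal α ≤ P {ω | L ω ≤ ℓ}}

/-!
Both sides are computed from `q = VaR_α(X)`. The α-level set `{ℓ | α ≤ F ℓ}` of the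
distribution function `F` of `X` is the closed ray `[q, ∞)` because `F` is right-continuous.
For `f` monotone and left-continuous this gives `P(f(X) ≤ ℓ) ≥ α ↔ f q ≤ ℓ`, i.e.
`VaR_α(f(X)) = f(VaR_α(X))`; since `f₁ + f₂` is again monotone and left-continuous,
additivity follows.
-/

open Filter Set ProbabilityTheory

theorem StieltjesFunction.le_apply_iff_csInf_le (F : StieltjesFunction ℝ) {α x : ℝ}
    (hne : {y | α ≤ F y}.Nonempty) (hbdd : BddBelow {y | α ≤ F y}) :
    α ≤ F x ↔ sInf {y | α ≤ F y} ≤ x := by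
  set q := sInf {y | α ≤ F y}
  have hq : α ≤ F q := by
    refine ge_of_tendsto ((F.right_continuous q).mono Ioi_subset_Ici_self) ?_
    filter_upwards [self_mem_nhdsWithin] with y (hy : q < y)
    obtain ⟨s, hs, hsy⟩ := exists_lt_of_csInf_lt hne hy
    exact hs.trans (F.mono hsy.le)
  exact ⟨fun hx => csInf_le hbdd hx, fun hx => hq.trans (F.mono hx)⟩

theorem ProbabilityTheory.le_cdf_iff_csInf_le (μ : Measure ℝ) {α x : ℝ} (hα0 : 0 < α)
    (hα1 : α < 1) : α ≤ cdf μ x ↔ sInf {y | α ≤ cdf μ y} ≤ x := by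
  refine (cdf μ).le_apply_iff_csInf_le ?_ ?_
  · exact ((tendsto_cdf_atTop μ).eventually (eventually_gt_nhds hα1)).exists.imp fun _ h => h.le
  · obtain ⟨a, ha⟩ :=
      ((tendsto_cdf_atBot μ).eventually (eventually_lt_nhds hα0)).exists_forall_of_atBot
    exact ⟨a, fun y hy => le_of_not_ge fun hya => (ha y hya).not_ge hy⟩

section VaR

variable {Ω : Type*} [MeasurableSpace Ω] {P : Measure Ω} {α : ℝ}

theorem ofReal_le_measure_le_iff_le_cdf [IsProbabilityMeasure P] {X : Ω → ℝ}
    (hX : AEMeasurable X P) (ℓ : ℝ) :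
    ENNReal.ofReal α ≤ P {ω | X ω ≤ ℓ} ↔ α ≤ cdf (P.map X) ℓ := by
  have : IsProbabilityMeasure (P.map X) := Measure.isProbabilityMeasure_map hX
  change _ ≤ P (X ⁻¹' Iic ℓ) ↔ _
  rw [← Measure.map_apply_of_aemeasurable hX measurableSet_Iic, ← ofReal_cdf,
    ENNReal.ofReal_le_ofReal_iff']
  exact or_iff_left_of_imp fun h => h.trans (cdf_nonneg _ _)

theorem VaR_le_iff [IsProbabilityMeasure P] {X : Ω → ℝ} (hX : AEMeasurable X P)
    (hα0 : 0 < α) (hα1 : α < 1) {ℓ : ℝ} :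
    VaR P α X ≤ ℓ ↔ ENNReal.ofReal α ≤ P {ω | X ω ≤ ℓ} := by
  simp only [VaR, ofReal_le_measure_le_iff_le_cdf hX]
  exact (le_cdf_iff_csInf_le _ hα0 hα1).symm

theorem VaR_eq_of_forall_le_iff {L : Ω → ℝ} {q : ℝ}
    (h : ∀ ℓ, ENNReal.ofReal α ≤ P {ω | L ω ≤ ℓ} ↔ q ≤ ℓ) : VaR P α L = q := by
  rw [VaR, show {ℓ | ENNReal.ofReal α ≤ P {ω | L ω ≤ ℓ}} = Ici q from Set.ext h,
    csInf_Ici]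

theorem VaR_comp_of_monotone_of_continuousWithinAt_Iio [IsProbabilityMeasure P] {X : Ω → ℝ}
    (hX : AEMeasurable X P) (hα0 : 0 < α) (hα1 : α < 1) {f : ℝ → ℝ} (hf : Monotone f)
    (hfc : ∀ x, ContinuousWithinAt f (Iio x) x) :
    VaR P α (fun ω => f (X ω)) = f (VaR P α X) := by
  set q := VaR P α X
  refine VaR_eq_of_forall_le_iff fun ℓ => ⟨fun hℓ => ?_, fun hℓ => ?_⟩
  · by_contra! hlt
    obtain ⟨x, hℓx, hxq : x < q⟩ :=
      (((hfc q).eventually (eventually_gt_nhds hlt)).and self_mem_nhdsWithin).exists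
    have hsub : {ω | f (X ω) ≤ ℓ} ⊆ {ω | X ω ≤ x} := fun ω hω =>
      le_of_not_gt fun hxX => (hℓx.trans_le (hf hxX.le)).not_ge hω
    exact hxq.not_ge ((VaR_le_iff hX hα0 hα1).2 (hℓ.trans (measure_mono hsub)))
  · exact ((VaR_le_iff hX hα0 hα1).1 le_rfl).trans
      (measure_mono fun ω hω => (hf hω).trans hℓ)

end VaR

theorem VaR_comonotonic_additive {Ω : Type*} [MeasurableSpace Ω] (P : Measure Ω)
    [IsProbabilityMeasure P] (X : Ω → ℝ) (hX : Measurable X)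
    (f₁ f₂ : ℝ → ℝ) (hf₁ : Monotone f₁) (hf₂ : Monotone f₂)
    (hf₁c : ∀ x : ℝ, ContinuousWithinAt f₁ (Set.Iio x) x)
    (hf₂c : ∀ x : ℝ, ContinuousWithinAt f₂ (Set.Iio x) x)
    (α : ℝ) (hα0 : 0 < α) (hα1 : α < 1) :
    VaR P α (fun ω => f₁ (X ω) + f₂ (X ω))
      = VaR P α (fun ω => f₁ (X ω)) + VaR P α (fun ω => f₂ (X ω)) := by
  have hVaR := fun f hf hfc => VaR_comp_of_monotone_of_continuousWithinAt_Iio (P := P)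
    hX.aemeasurable hα0 hα1 (f := f) hf hfc
  rw [hVaR f₁ hf₁ hf₁c, hVaR f₂ hf₂ hf₂c,
    hVaR (fun x => f₁ x + f₂ x) (hf₁.add hf₂) fun x => (hf₁c x).add (hf₂c x)]
end

section
/- Expected Shortfall is subadditive: for 0 < α < 1 and integrable random variables L₁, L₂ on a common probability space, ES_α(L₁ + L₂) ≤ ES_α(L₁) + ES_α(L₂), where ES_α(L) = (1/(1−α)) ∫_α^1 q_u(L) du. -/
/-!
Under the uniform distribution on `(0, 1)` the quantile function `u ↦ q_u(L)` has the law of `L`,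
since `q_u(L) ≤ s ↔ u ≤ F_L(s)` for `0 < u < 1`. Writing `q_u ≤ x + (q_u - x)⁺` therefore gives
`∫_α^1 q_u(L) du ≤ (1 - α) x + E (L - x)⁺` for every `x`, with equality at `x = q_α(L)` because
`q_u ≥ q_α` on `(α, 1)` and `(q_u - q_α)⁺` vanishes on `(0, α]`. Evaluating the bound for `L₁ + L₂`
at `x = q_α(L₁) + q_α(L₂)` and using `(a + b)⁺ ≤ a⁺ + b⁺` gives subadditivity.
-/

open MeasureTheory

noncomputable def quantile {Ω : Type*} [MeasurableSpace Ω] (P : Measure Ω) (u : ℝ)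
    (L : Ω → ℝ) : ℝ :=
  sInf {ℓ : ℝ | ENNReal.ofReal u ≤ P {ω | L ω ≤ ℓ}}

noncomputable def ES {Ω : Type*} [MeasurableSpace Ω] (P : Measure Ω) (α : ℝ) (L : Ω → ℝ) : ℝ :=
  (1 - α)⁻¹ * ∫ u in α..1, quantile P u L

open ProbabilityTheory Set Filter Topology

theorem StieltjesFunction.sInf_setOf_le_le_iff (f : StieltjesFunction ℝ)
    (hf0 : Tendsto f atBot (𝓝 0)) (hf1 : Tendsto f atTop (𝓝 1)) {u s : ℝ} (hu0 : 0 < u)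
    (hu1 : u < 1) : sInf {x | u ≤ f x} ≤ s ↔ u ≤ f s := by
  set S := {x | u ≤ f x}
  obtain ⟨a, ha⟩ := eventually_atBot.1 (hf0.eventually (eventually_lt_nhds hu0))
  have hbdd : BddBelow S := ⟨a, fun x hx => le_of_not_ge fun hxa => (ha x hxa).not_ge hx⟩
  have hne : S.Nonempty := (hf1.eventually (eventually_gt_nhds hu1)).exists.imp fun _ => le_of_lt
  have hmem : u ≤ f (sInf S) := by
    refine ge_of_tendsto ((f.right_continuous _).mono Ioi_subset_Ici_self) ?_
    filter_upwards [self_mem_nhdsWithin] with x hx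
    obtain ⟨y, hyS, hyx⟩ := exists_lt_of_csInf_lt hne hx
    exact hyS.trans (f.mono hyx.le)
  exact ⟨fun h => hmem.trans (f.mono h), fun h => csInf_le hbdd h⟩

theorem setIntegral_Ioo_const_add {a b : ℝ} (hab : a ≤ b) {c : ℝ} {f : ℝ → ℝ}
    (hf : IntegrableOn f (Ioo a b)) :
    ∫ u in Ioo a b, (c + f u) = (b - a) * c + ∫ u in Ioo a b, f u := by
  rw [integral_add (integrableOn_const (C := c) measure_Ioo_lt_top.ne) hf, setIntegral_const,
    Real.volume_real_Ioo_of_le hab, smul_eq_mul]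

noncomputable def rockafellarUryasev {Ω : Type*} [MeasurableSpace Ω] (P : Measure Ω) (α : ℝ)
    (L : Ω → ℝ) (x : ℝ) : ℝ :=
  (1 - α) * x + ∫ ω, max (L ω - x) 0 ∂P

theorem rockafellarUryasev_add_le {Ω : Type*} [MeasurableSpace Ω] {P : Measure Ω}
    [IsFiniteMeasure P] {α : ℝ} {L₁ L₂ : Ω → ℝ} (hL₁ : Integrable L₁ P) (hL₂ : Integrable L₂ P) (x₁ x₂ : ℝ) :
    rockafellarUryasev P α (fun ω => L₁ ω + L₂ ω) (x₁ + x₂) ≤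
      rockafellarUryasev P α L₁ x₁ + rockafellarUryasev P α L₂ x₂ := by
  have h₁ : Integrable (fun ω => max (L₁ ω - x₁) 0) P := (hL₁.sub (integrable_const x₁)).pos_part
  have h₂ : Integrable (fun ω => max (L₂ ω - x₂) 0) P := (hL₂.sub (integrable_const x₂)).pos_part
  have hsum : ∫ ω, max (L₁ ω + L₂ ω - (x₁ + x₂)) 0 ∂P ≤
      ∫ ω, max (L₁ ω - x₁) 0 ∂P + ∫ ω, max (L₂ ω - x₂) 0 ∂P := by
    rw [← integral_add h₁ h₂]
    refine integral_mono ((hL₁.add hL₂).sub (integrable_const _)).pos_part (h₁.add h₂) fun ω => ?_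
    exact max_le (by linarith [le_max_left (L₁ ω - x₁) 0, le_max_left (L₂ ω - x₂) 0])
      (add_nonneg (le_max_right _ _) (le_max_right _ _))
  simp only [rockafellarUryasev]
  linarith

section Quantile

variable {Ω : Type*} [MeasurableSpace Ω] {P : Measure Ω} [IsProbabilityMeasure P] {L : Ω → ℝ}
  {α : ℝ}

theorem quantile_eq_sInf_cdf (hL : Measurable L) (u : ℝ) :
    quantile P u L = sInf {x | u ≤ cdf (P.map L) x} := by
  have := Measure.isProbabilityMeasure_map (μ := P) hL.aemeasurable
  rw [quantile]
  congr 1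
  ext x
  rw [mem_ofPred_eq, mem_ofPred_eq, ← ENNReal.ofReal_le_ofReal_iff (cdf_nonneg _ x), ofReal_cdf,
    Measure.map_apply hL measurableSet_Iic]
  rfl

theorem quantile_le_iff (hL : Measurable L) {u : ℝ} (hu0 : 0 < u) (hu1 : u < 1) {s : ℝ} :
    quantile P u L ≤ s ↔ u ≤ cdf (P.map L) s := by
  rw [quantile_eq_sInf_cdf hL]
  exact (cdf _).sInf_setOf_le_le_iff (tendsto_cdf_atBot _) (tendsto_cdf_atTop _) hu0 hu1

theorem quantile_monotoneOn (hL : Measurable L) :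
    MonotoneOn (fun u => quantile P u L) (Ioo 0 1) := fun _ hu _ hv huv =>
  (quantile_le_iff hL hu.1 hu.2).2 <| huv.trans <| (quantile_le_iff hL hv.1 hv.2).1 le_rfl

theorem aemeasurable_quantile (hL : Measurable L) :
    AEMeasurable (fun u => quantile P u L) (volume.restrict (Ioo 0 1)) :=
  aemeasurable_restrict_of_monotoneOn measurableSet_Ioo (quantile_monotoneOn hL)

theorem map_quantile_volume_Ioo (hL : Measurable L) :
    (volume.restrict (Ioo 0 1)).map (fun u => quantile P u L) = P.map L := by
  have := Measure.isProbabilityMeasure_map (μ := P) hL.aemeasurable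
  have := isFiniteMeasure_restrict.2 (measure_Ioo_lt_top (μ := volume) (a := (0 : ℝ)) (b := 1)).ne
  refine Measure.ext_of_Iic _ _ fun s => ?_
  set c := cdf (P.map L) s
  have hpre : (fun u => quantile P u L) ⁻¹' Iic s ∩ Ioo 0 1 = Iic c ∩ Ioo 0 1 := by
    ext u
    simp only [mem_inter_iff, mem_preimage, mem_Iic, and_congr_left_iff]
    exact fun hu => quantile_le_iff hL hu.1 hu.2
  have hIoc : Iic c ∩ Ioc 0 1 = Ioc 0 c := by
    rw [inter_comm, Ioc_inter_Iic, inf_of_le_right (cdf_le_one _ s)]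
  rw [Measure.map_apply_of_aemeasurable (aemeasurable_quantile hL) measurableSet_Iic,
    Measure.restrict_apply' measurableSet_Ioo, hpre,
    measure_congr ((ae_eq_refl _).inter Ioo_ae_eq_Ioc), hIoc, Real.volume_Ioc, sub_zero, ofReal_cdf]

theorem integrableOn_comp_quantile_iff (hL : Measurable L) {g : ℝ → ℝ} (hg : Measurable g) :
    IntegrableOn (fun u => g (quantile P u L)) (Ioo 0 1) ↔ Integrable (fun ω => g (L ω)) P := by
  have hmap := integrable_map_measure hg.aestronglyMeasurable (aemeasurable_quantile (P := P) hL)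
  rw [map_quantile_volume_Ioo hL, integrable_map_measure hg.aestronglyMeasurable hL.aemeasurable]
    at hmap
  exact hmap.symm

theorem setIntegral_comp_quantile (hL : Measurable L) {g : ℝ → ℝ} (hg : Measurable g) :
    ∫ u in Ioo 0 1, g (quantile P u L) = ∫ ω, g (L ω) ∂P := by
  rw [← integral_map (aemeasurable_quantile hL) hg.aestronglyMeasurable,
    map_quantile_volume_Ioo hL, integral_map hL.aemeasurable hg.aestronglyMeasurable]

theorem integrableOn_posPart_quantile_sub (hL : Measurable L) (hLi : Integrable L P) (x : ℝ) :
    IntegrableOn (fun u => max (quantile P u L - x) 0) (Ioo 0 1) :=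
  (integrableOn_comp_quantile_iff (P := P) hL (g := fun y => max (y - x) 0) (by fun_prop)).2
    (hLi.sub (integrable_const x)).pos_part

theorem setIntegral_posPart_quantile_sub (hL : Measurable L) (x : ℝ) :
    ∫ u in Ioo 0 1, max (quantile P u L - x) 0 = ∫ ω, max (L ω - x) 0 ∂P :=
  setIntegral_comp_quantile hL (g := fun y => max (y - x) 0) (by fun_prop)

theorem quantile_eq_add_posPart_sub (hL : Measurable L) (hα0 : 0 < α) (hα1 : α < 1) {u : ℝ}
    (hu : u ∈ Ioo α 1) :
    quantile P u L = quantile P α L + max (quantile P u L - quantile P α L) 0 := by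
  have := quantile_monotoneOn (P := P) hL ⟨hα0, hα1⟩ ⟨hα0.trans hu.1, hu.2⟩ hu.1.le
  rw [max_eq_left (sub_nonneg.2 this)]
  ring

theorem integrableOn_quantile (hL : Measurable L) (hLi : Integrable L P) (hα0 : 0 < α)
    (hα1 : α < 1) : IntegrableOn (fun u => quantile P u L) (Ioo α 1) := by
  have hpos := (integrableOn_posPart_quantile_sub hL hLi (quantile P α L)).mono_set
    (Ioo_subset_Ioo_left hα0.le)
  exact ((integrableOn_const measure_Ioo_lt_top.ne).add hpos).congr_fun
    (fun _ hu => (quantile_eq_add_posPart_sub hL hα0 hα1 hu).symm) measurableSet_Ioo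

theorem integral_quantile_eq (hL : Measurable L) (hLi : Integrable L P) (hα0 : 0 < α)
    (hα1 : α < 1) :
    ∫ u in α..1, quantile P u L = rockafellarUryasev P α L (quantile P α L) := by
  set q := quantile P α L
  have hvanish : ∀ u ∈ Ioo 0 1 \ Ioo α 1, max (quantile P u L - q) 0 = 0 := by
    rintro u ⟨hu, hnot⟩
    have huα : u ≤ α := le_of_not_gt fun h => hnot ⟨h, hu.2⟩
    exact max_eq_right (sub_nonpos.2 (quantile_monotoneOn hL hu ⟨hα0, hα1⟩ huα))
  calc ∫ u in α..1, quantile P u L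
      = ∫ u in Ioo α 1, (q + max (quantile P u L - q) 0) := by
        rw [intervalIntegral.integral_of_le hα1.le, integral_Ioc_eq_integral_Ioo]
        exact setIntegral_congr_fun measurableSet_Ioo fun u hu =>
          quantile_eq_add_posPart_sub hL hα0 hα1 hu
    _ = (1 - α) * q + ∫ u in Ioo α 1, max (quantile P u L - q) 0 :=
        setIntegral_Ioo_const_add hα1.le
          ((integrableOn_posPart_quantile_sub hL hLi q).mono_set (Ioo_subset_Ioo_left hα0.le))
    _ = rockafellarUryasev P α L q := by
        rw [← setIntegral_eq_of_subset_of_forall_sdiff_eq_zero measurableSet_Ioo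
          (Ioo_subset_Ioo_left hα0.le) hvanish, setIntegral_posPart_quantile_sub hL]
        rfl

theorem integral_quantile_le (hL : Measurable L) (hLi : Integrable L P) (hα0 : 0 < α)
    (hα1 : α < 1) (x : ℝ) : ∫ u in α..1, quantile P u L ≤ rockafellarUryasev P α L x := by
  have hpos := integrableOn_posPart_quantile_sub hL hLi x
  calc ∫ u in α..1, quantile P u L = ∫ u in Ioo α 1, quantile P u L := by
        rw [intervalIntegral.integral_of_le hα1.le, integral_Ioc_eq_integral_Ioo]
    _ ≤ ∫ u in Ioo α 1, (x + max (quantile P u L - x) 0) :=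
        setIntegral_mono_on (integrableOn_quantile hL hLi hα0 hα1)
          ((integrableOn_const measure_Ioo_lt_top.ne).add
            (hpos.mono_set (Ioo_subset_Ioo_left hα0.le))) measurableSet_Ioo
          fun u _ => by linarith [le_max_left (quantile P u L - x) 0]
    _ = (1 - α) * x + ∫ u in Ioo α 1, max (quantile P u L - x) 0 :=
        setIntegral_Ioo_const_add hα1.le (hpos.mono_set (Ioo_subset_Ioo_left hα0.le))
    _ ≤ (1 - α) * x + ∫ u in Ioo 0 1, max (quantile P u L - x) 0 := by
        have := setIntegral_mono_set hpos
          (ae_of_all _ fun u => le_max_right (quantile P u L - x) 0)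
          (Ioo_subset_Ioo_left hα0.le).eventuallyLE
        linarith
    _ = rockafellarUryasev P α L x := by
        rw [setIntegral_posPart_quantile_sub hL]
        rfl

end Quantile

theorem ES_subadditive {Ω : Type*} [MeasurableSpace Ω] (P : Measure Ω)
    [IsProbabilityMeasure P] (L₁ L₂ : Ω → ℝ) (hL₁m : Measurable L₁) (hL₂m : Measurable L₂)
    (hL₁ : Integrable L₁ P) (hL₂ : Integrable L₂ P)
    (α : ℝ) (hα0 : 0 < α) (hα1 : α < 1) :
    ES P α (fun ω => L₁ ω + L₂ ω) ≤ ES P α L₁ + ES P α L₂ := by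
  have hsum : ∫ u in α..1, quantile P u (fun ω => L₁ ω + L₂ ω) ≤
      (∫ u in α..1, quantile P u L₁) + ∫ u in α..1, quantile P u L₂ :=
    calc _ ≤ rockafellarUryasev P α (fun ω => L₁ ω + L₂ ω)
            (quantile P α L₁ + quantile P α L₂) :=
          integral_quantile_le (hL₁m.add hL₂m) (hL₁.add hL₂) hα0 hα1 _
      _ ≤ rockafellarUryasev P α L₁ (quantile P α L₁) +
            rockafellarUryasev P α L₂ (quantile P α L₂) :=
          rockafellarUryasev_add_le hL₁ hL₂ _ _
      _ = _ := by rw [integral_quantile_eq hL₁m hL₁ hα0 hα1, integral_quantile_eq hL₂m hL₂ hα0 hα1]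
  rw [ES, ES, ES, ← mul_add]
  exact mul_le_mul_of_nonneg_left hsum (inv_nonneg.2 (sub_nonneg.2 hα1.le))
end

section
/- The α-quantile is elicited by the weighted absolute error: for a random variable L with finite mean whose distribution function is continuous and strictly increasing, and 0 < α < 1, the function x ↦ E[(1_{x ≥ L} − α)(x − L)] attains its minimum over ℝ exactly at x = q_α(L). -/
open MeasureTheory

/-! For all `a b ℓ`, `s(b, ℓ) = s(a, ℓ) + (1_{ℓ ≤ a} - α)(b - a) + r(a, b, ℓ)` with a remainder
`r(a, b, ℓ) = (1_{ℓ ≤ b} - 1_{ℓ ≤ a})(b - ℓ) ≥ 0`, strictly positive for `ℓ` strictly between `a`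
and `b`. Continuity of the distribution function `F` gives `F(q) = α` at `q = q_α(L)`, so taking
expectations with `a = q` kills the linear term, and strict monotonicity of `F` gives the interval
between `q` and `x` positive mass, hence a positive expected remainder. -/

open ProbabilityTheory Set Filter

noncomputable def quantileScore (α x ℓ : ℝ) : ℝ := ((if ℓ ≤ x then 1 else 0) - α) * (x - ℓ)

noncomputable def scoreRemainder (a b ℓ : ℝ) : ℝ :=
  ((if ℓ ≤ b then 1 else 0) - (if ℓ ≤ a then 1 else 0)) * (b - ℓ)

theorem quantileScore_eq_add (α a b ℓ : ℝ) :
    quantileScore α b ℓ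
      = quantileScore α a ℓ + ((if ℓ ≤ a then 1 else 0) - α) * (b - a) + scoreRemainder a b ℓ := by
  unfold quantileScore scoreRemainder
  ring

theorem scoreRemainder_nonneg (a b ℓ : ℝ) : 0 ≤ scoreRemainder a b ℓ := by
  unfold scoreRemainder
  split_ifs <;> nlinarith

theorem scoreRemainder_pos {a b ℓ : ℝ} (h : ℓ ∈ Ioo (min a b) (max a b)) :
    0 < scoreRemainder a b ℓ := by
  unfold scoreRemainder
  rcases le_total a b with hab | hab
  · rw [min_eq_left hab, max_eq_right hab] at h
    rw [if_pos h.2.le, if_neg h.1.not_ge]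
    linarith [h.2]
  · rw [min_eq_right hab, max_eq_left hab] at h
    rw [if_neg h.1.not_ge, if_pos h.2.le]
    linarith [h.1]

section

variable {Ω : Type*} [MeasurableSpace Ω] {P : Measure Ω} {L : Ω → ℝ}

theorem integrable_quantileScore [IsFiniteMeasure P] (hLm : Measurable L) (hL : Integrable L P)
    (α x : ℝ) : Integrable (fun ω => quantileScore α x (L ω)) P := by
  refine Integrable.bdd_mul (c := 1 + |α|) ((integrable_const x).sub hL)
    ((Measurable.ite (hLm measurableSet_Iic) measurable_const measurable_const).sub
      measurable_const).aestronglyMeasurable (Eventually.of_forall fun ω => ?_)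
  refine (norm_sub_le _ _).trans (add_le_add ?_ le_rfl)
  split_ifs <;> simp

theorem integrable_scoreRemainder [IsFiniteMeasure P] (hLm : Measurable L) (hL : Integrable L P)
    (a b : ℝ) : Integrable (fun ω => scoreRemainder a b (L ω)) P := by
  refine Integrable.bdd_mul (c := 1) ((integrable_const b).sub hL)
    ((Measurable.ite (hLm measurableSet_Iic) measurable_const measurable_const).sub
      (Measurable.ite (hLm measurableSet_Iic) measurable_const measurable_const)
      ).aestronglyMeasurable (Eventually.of_forall fun ω => ?_)
  split_ifs <;> simp

theorem integral_quantileScore_sub [IsProbabilityMeasure P] (hLm : Measurable L)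
    (hL : Integrable L P) (α a b : ℝ) :
    ∫ ω, quantileScore α b (L ω) ∂P - ∫ ω, quantileScore α a (L ω) ∂P
      = ((P {ω | L ω ≤ a}).toReal - α) * (b - a) + ∫ ω, scoreRemainder a b (L ω) ∂P := by
  have hind : (fun ω => if L ω ≤ a then (1 : ℝ) else 0) = (L ⁻¹' Iic a).indicator 1 := by
    ext ω
    by_cases h : L ω ≤ a <;> simp [h]
  have hind_int : Integrable (fun ω => if L ω ≤ a then (1 : ℝ) else 0) P := by
    rw [hind]
    exact (integrable_const 1).indicator (hLm measurableSet_Iic)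
  rw [← integral_sub (integrable_quantileScore hLm hL α b) (integrable_quantileScore hLm hL α a)]
  simp_rw [quantileScore_eq_add α a b, add_assoc, add_sub_cancel_left]
  rw [integral_add (by exact (hind_int.sub (integrable_const α)).mul_const _)
    (integrable_scoreRemainder hLm hL a b), integral_mul_const,
    integral_sub hind_int (integrable_const α), hind,
    integral_indicator_one (hLm measurableSet_Iic), integral_const, probReal_univ, one_smul]
  rfl

theorem measure_preimage_Ioo_pos [IsFiniteMeasure P]
    (hmono : StrictMono fun x : ℝ => (P {ω | L ω ≤ x}).toReal) {a b : ℝ} (hab : a < b) :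
    0 < P (L ⁻¹' Ioo a b) := by
  have hlt : P {ω | L ω ≤ a} < P {ω | L ω ≤ (a + b) / 2} :=
    (ENNReal.toReal_lt_toReal (measure_ne_top _ _) (measure_ne_top _ _)).1
      (hmono (by linarith))
  have hcover : {ω | L ω ≤ (a + b) / 2} ⊆ {ω | L ω ≤ a} ∪ L ⁻¹' Ioo a b := by
    intro ω hω
    by_cases h : L ω ≤ a
    · exact Or.inl h
    · exact Or.inr ⟨not_le.1 h, (show L ω ≤ (a + b) / 2 from hω).trans_lt (by linarith)⟩
  refine pos_iff_ne_zero.2 fun h0 => hlt.not_ge ?_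
  calc P {ω | L ω ≤ (a + b) / 2} ≤ P ({ω | L ω ≤ a} ∪ L ⁻¹' Ioo a b) := measure_mono hcover
    _ ≤ P {ω | L ω ≤ a} + P (L ⁻¹' Ioo a b) := measure_union_le _ _
    _ = P {ω | L ω ≤ a} := by rw [h0, add_zero]

theorem integral_scoreRemainder_pos [IsFiniteMeasure P] (hLm : Measurable L)
    (hL : Integrable L P) (hmono : StrictMono fun x : ℝ => (P {ω | L ω ≤ x}).toReal)
    {a b : ℝ} (hab : a ≠ b) : 0 < ∫ ω, scoreRemainder a b (L ω) ∂P := by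
  refine (integral_pos_iff_support_of_nonneg (fun ω => scoreRemainder_nonneg a b (L ω))
    (integrable_scoreRemainder hLm hL a b)).2 ?_
  exact (measure_preimage_Ioo_pos hmono (min_lt_max.2 hab)).trans_le
    (measure_mono fun ω hω => (scoreRemainder_pos hω).ne')

theorem exists_toReal_measure_le_eq [IsProbabilityMeasure P] (hLm : Measurable L)
    (hcont : Continuous fun x : ℝ => (P {ω | L ω ≤ x}).toReal) {u : ℝ} (hu0 : 0 < u)
    (hu1 : u < 1) : ∃ q, (P {ω | L ω ≤ q}).toReal = u := by
  have := Measure.isProbabilityMeasure_map (μ := P) hLm.aemeasurable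
  have hcdf : (fun x : ℝ => (P {ω | L ω ≤ x}).toReal) = cdf (P.map L) := by
    ext x
    rw [cdf_eq_real, map_measureReal_apply hLm measurableSet_Iic]
    rfl
  rw [hcdf] at hcont
  have hu := mem_range_of_exists_le_of_exists_ge hcont
    ((tendsto_cdf_atBot _).eventually (eventually_le_nhds hu0)).exists
    ((tendsto_cdf_atTop _).eventually (eventually_ge_nhds hu1)).exists
  rwa [← hcdf] at hu

theorem quantile_eq_of_toReal_measure_le_eq [IsFiniteMeasure P]
    (hmono : StrictMono fun x : ℝ => (P {ω | L ω ≤ x}).toReal) {u q : ℝ}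
    (hq : (P {ω | L ω ≤ q}).toReal = u) : quantile P u L = q := by
  have hset : {ℓ : ℝ | ENNReal.ofReal u ≤ P {ω | L ω ≤ ℓ}} = Ici q := by
    ext ℓ
    rw [mem_ofPred_eq, ENNReal.ofReal_le_iff_le_toReal (measure_ne_top P _), ← hq]
    exact hmono.le_iff_le
  rw [quantile, hset, csInf_Ici]

end

theorem quantile_elicited_by_weighted_absolute_error {Ω : Type*} [MeasurableSpace Ω]
    (P : Measure Ω) [IsProbabilityMeasure P] (L : Ω → ℝ) (hLm : Measurable L)
    (hL : Integrable L P)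
    (hcont : Continuous fun x : ℝ => (P {ω | L ω ≤ x}).toReal)
    (hmono : StrictMono fun x : ℝ => (P {ω | L ω ≤ x}).toReal)
    (α : ℝ) (hα0 : 0 < α) (hα1 : α < 1) :
    ∀ x : ℝ, x ≠ quantile P α L →
      (∫ ω, ((if L ω ≤ quantile P α L then (1 : ℝ) else 0) - α) * (quantile P α L - L ω) ∂P)
        < ∫ ω, ((if L ω ≤ x then (1 : ℝ) else 0) - α) * (x - L ω) ∂P := by
  intro x hx
  obtain ⟨q, hq⟩ := exists_toReal_measure_le_eq hLm hcont hα0 hα1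
  rw [quantile_eq_of_toReal_measure_le_eq hmono hq] at hx ⊢
  have hgap := integral_quantileScore_sub hLm hL α q x
  rw [hq, sub_self, zero_mul, zero_add] at hgap
  exact sub_pos.1 (hgap ▸ integral_scoreRemainder_pos hLm hL hmono hx.symm)
end

section
/- If 1/2 ≤ τ < 1 and L₁, L₂ are integrable random variables on a common probability space with L₂ = a·L₁ + b almost surely for some a > 0 and b ∈ ℝ (i.e., corr(L₁, L₂) = 1), then the τ-expectile is additive: e_τ(L₁ + L₂) = e_τ(L₁) + e_τ(L₂). -/
/-!
The expectile condition is preserved by increasing affine maps: if `ℓ` is a `τ`-expectile of `L`,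
then `c * ℓ + b` is one of `c * L + b` for `c > 0`. Under `L₂ = a L₁ + b` both `L₂` and `L₁ + L₂`
are such images of `L₁`, so by uniqueness `e_τ(L₂) = a e_τ(L₁) + b` and
`e_τ(L₁ + L₂) = (1 + a) e_τ(L₁) + b`. Uniqueness holds because the integrated identification
function `ℓ ↦ τ E[(L - ℓ)⁺] - (1 - τ) E[(ℓ - L)⁺]` decreases with slope at least
`min τ (1 - τ) > 0`.
-/

open MeasureTheory

namespace MeasureTheory

variable {Ω : Type*} [MeasurableSpace Ω] {P : Measure Ω} {τ : ℝ} {L L' : Ω → ℝ} {ℓ : ℝ}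

def IsExpectile (P : Measure Ω) (τ : ℝ) (L : Ω → ℝ) (ℓ : ℝ) : Prop :=
  τ * ∫ ω, max (L ω - ℓ) 0 ∂P = (1 - τ) * ∫ ω, max (ℓ - L ω) 0 ∂P

theorem isExpectile_congr_ae (h : L =ᵐ[P] L') : IsExpectile P τ L ℓ ↔ IsExpectile P τ L' ℓ := by
  have hpos : ∫ ω, max (L ω - ℓ) 0 ∂P = ∫ ω, max (L' ω - ℓ) 0 ∂P :=
    integral_congr_ae (h.mono fun ω hω => by simp only [hω])
  have hneg : ∫ ω, max (ℓ - L ω) 0 ∂P = ∫ ω, max (ℓ - L' ω) 0 ∂P :=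
    integral_congr_ae (h.mono fun ω hω => by simp only [hω])
  rw [IsExpectile, IsExpectile, hpos, hneg]

theorem IsExpectile.mul_add {c : ℝ} (h : IsExpectile P τ L ℓ) (hc : 0 < c) (b : ℝ) :
    IsExpectile P τ (fun ω => c * L ω + b) (c * ℓ + b) := by
  have hpos : ∀ ω, max (c * L ω + b - (c * ℓ + b)) 0 = c * max (L ω - ℓ) 0 := fun ω => by
    rw [mul_max_of_nonneg _ _ hc.le, mul_zero]; ring_nf
  have hneg : ∀ ω, max (c * ℓ + b - (c * L ω + b)) 0 = c * max (ℓ - L ω) 0 := fun ω => by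
    rw [mul_max_of_nonneg _ _ hc.le, mul_zero]; ring_nf
  unfold IsExpectile at h ⊢
  simp_rw [hpos, hneg, integral_const_mul]
  linear_combination c * h

theorem identification_add_min_mul_le (τ x : ℝ) {p q : ℝ} (hpq : p ≤ q) :
    τ * max (x - q) 0 - (1 - τ) * max (q - x) 0 + min τ (1 - τ) * (q - p)
      ≤ τ * max (x - p) 0 - (1 - τ) * max (p - x) 0 := by
  have hτ := min_le_left τ (1 - τ)
  have hτ' := min_le_right τ (1 - τ)
  rcases le_total x p with hxp | hpx
  · rw [max_eq_right (by linarith : x - q ≤ 0), max_eq_left (by linarith : 0 ≤ q - x),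
      max_eq_right (by linarith : x - p ≤ 0), max_eq_left (by linarith : 0 ≤ p - x)]
    nlinarith
  rcases le_total x q with hxq | hqx
  · rw [max_eq_right (by linarith : x - q ≤ 0), max_eq_left (by linarith : 0 ≤ q - x),
      max_eq_left (by linarith : 0 ≤ x - p), max_eq_right (by linarith : p - x ≤ 0)]
    nlinarith
  · rw [max_eq_left (by linarith : 0 ≤ x - q), max_eq_right (by linarith : q - x ≤ 0),
      max_eq_left (by linarith : 0 ≤ x - p), max_eq_right (by linarith : p - x ≤ 0)]
    nlinarith

variable [IsFiniteMeasure P]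

theorem integrable_identification (hL : Integrable L P) (τ ℓ : ℝ) :
    Integrable (fun ω => τ * max (L ω - ℓ) 0 - (1 - τ) * max (ℓ - L ω) 0) P :=
  ((hL.sub (integrable_const ℓ)).pos_part.const_mul τ).sub
    (((integrable_const ℓ).sub hL).pos_part.const_mul (1 - τ))

theorem isExpectile_iff_integral_eq_zero (hL : Integrable L P) :
    IsExpectile P τ L ℓ ↔
      ∫ ω, (τ * max (L ω - ℓ) 0 - (1 - τ) * max (ℓ - L ω) 0) ∂P = 0 := by
  have hpos : Integrable (fun ω => max (L ω - ℓ) 0) P := (hL.sub (integrable_const ℓ)).pos_part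
  have hneg : Integrable (fun ω => max (ℓ - L ω) 0) P := ((integrable_const ℓ).sub hL).pos_part
  rw [integral_sub (hpos.const_mul τ) (hneg.const_mul (1 - τ)), integral_const_mul,
    integral_const_mul, sub_eq_zero, IsExpectile]

variable [NeZero P]

theorem IsExpectile.le_of_isExpectile {u v : ℝ} (hτ₀ : 0 < τ) (hτ₁ : τ < 1)
    (hL : Integrable L P) (hu : IsExpectile P τ L u) (hv : IsExpectile P τ L v) : u ≤ v := by
  by_contra! hvu
  have hmono : ∫ ω, (τ * max (L ω - u) 0 - (1 - τ) * max (u - L ω) 0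
        + min τ (1 - τ) * (u - v)) ∂P
      ≤ ∫ ω, (τ * max (L ω - v) 0 - (1 - τ) * max (v - L ω) 0) ∂P :=
    integral_mono ((integrable_identification hL τ u).add (integrable_const _))
      (integrable_identification hL τ v) fun ω => identification_add_min_mul_le τ (L ω) hvu.le
  rw [integral_add (integrable_identification hL τ u) (integrable_const _), integral_const,
    smul_eq_mul, (isExpectile_iff_integral_eq_zero hL).1 hu,
    (isExpectile_iff_integral_eq_zero hL).1 hv, zero_add] at hmono
  have hmin : 0 < min τ (1 - τ) := lt_min hτ₀ (by linarith)
  have := mul_pos (measureReal_univ_pos (μ := P)) (mul_pos hmin (sub_pos.2 hvu))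
  linarith

theorem IsExpectile.unique {u v : ℝ} (hτ₀ : 0 < τ) (hτ₁ : τ < 1) (hL : Integrable L P)
    (hu : IsExpectile P τ L u) (hv : IsExpectile P τ L v) : u = v :=
  le_antisymm (hu.le_of_isExpectile hτ₀ hτ₁ hL hv) (hv.le_of_isExpectile hτ₀ hτ₁ hL hu)

end MeasureTheory

theorem expectile_additive_linear_dependence {Ω : Type*} [MeasurableSpace Ω] (P : Measure Ω)
    [IsProbabilityMeasure P] (L₁ L₂ : Ω → ℝ) (hL₁ : Integrable L₁ P) (hL₂ : Integrable L₂ P)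
    (a b : ℝ) (ha : 0 < a) (hlin : ∀ᵐ ω ∂P, L₂ ω = a * L₁ ω + b)
    (τ : ℝ) (hτ0 : 1 / 2 ≤ τ) (hτ1 : τ < 1) (ℓ₁ ℓ₂ ℓ₁₂ : ℝ)
    (hℓ₁ : τ * ∫ ω, max (L₁ ω - ℓ₁) 0 ∂P = (1 - τ) * ∫ ω, max (ℓ₁ - L₁ ω) 0 ∂P)
    (hℓ₂ : τ * ∫ ω, max (L₂ ω - ℓ₂) 0 ∂P = (1 - τ) * ∫ ω, max (ℓ₂ - L₂ ω) 0 ∂P)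
    (hℓ₁₂ : τ * ∫ ω, max ((L₁ ω + L₂ ω) - ℓ₁₂) 0 ∂P
        = (1 - τ) * ∫ ω, max (ℓ₁₂ - (L₁ ω + L₂ ω)) 0 ∂P) :
    ℓ₁₂ = ℓ₁ + ℓ₂ := by
  have hτ : 0 < τ := by linarith
  have hsum : (fun ω => L₁ ω + L₂ ω) =ᵐ[P] fun ω => (1 + a) * L₁ ω + b :=
    hlin.mono fun ω h => by simp only [h]; ring
  have e₂ : ℓ₂ = a * ℓ₁ + b :=
    IsExpectile.unique hτ hτ1 hL₂ hℓ₂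
      ((isExpectile_congr_ae hlin).2 (IsExpectile.mul_add hℓ₁ ha b))
  have e₁₂ : ℓ₁₂ = (1 + a) * ℓ₁ + b :=
    IsExpectile.unique hτ hτ1 (hL₁.add hL₂) hℓ₁₂
      ((isExpectile_congr_ae hsum).2 (IsExpectile.mul_add hℓ₁ (by linarith) b))
  rw [e₁₂, e₂]
  ring
end
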